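/- arXiv:2306.10282 — 3 statements merged into one kernel-verified Lean document; each statement's English description precedes it below -/
import Mathlib

section
/- Let d > 1 be a square-free positive integer, and p < 0, q ∈ ℚ with q ≠ 0 such that d' := p² − q²d > 0. If d' ∈ d·(ℚ^×)² (i.e. d'/d is a nonzero rational square), then the field K = ℚ(√(p + q√d)) has degree 4 over ℚ, is Galois over ℚ, and contains ℚ(√d). -/
/-!
Write `ξ = ξp`, `K = ℚ(ξ)`. Since `√d = (ξ² - p) / q`, `K` contains `ℚ(√d)`, which has degree 2, and
`ξ` is a root of `(X² - p)² - q²d`; so `[K : ℚ]` is an even number at most 4. It is not 2, since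
then `K = ℚ(√d) ⊆ ℝ`, whereas `ξ` is nonzero and purely imaginary. The remaining roots of the
quartic are `±η` with `η = r√d / ξ ∈ K`: indeed `ξ²η² = dr² = p² - q²d`, so `η² = p - q√d`. Hence
`K` is the splitting field of the quartic and is Galois.
-/

open IntermediateField Polynomial Module

section FieldExtension

variable {F L : Type*} [Field F] [Field L] [Algebra F L]

theorem mem_adjoin_simple_of_sq_eq {α s : L} {p q : F} (hq : q ≠ 0)
    (h : α ^ 2 = algebraMap F L p + algebraMap F L q * s) : s ∈ F⟮α⟯ := by
  have hs : s = (algebraMap F L q)⁻¹ * (α ^ 2 - algebraMap F L p) := by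
    rw [h, add_sub_cancel_left, inv_mul_cancel_left₀ ((_root_.map_ne_zero _).2 hq)]
  rw [hs]
  exact mul_mem (inv_mem (IntermediateField.algebraMap_mem _ q))
    (sub_mem (pow_mem (mem_adjoin_simple_self F α) 2) (IntermediateField.algebraMap_mem _ p))

theorem finrank_adjoin_simple_eq_two {s : L} {a : F} (hs : s ^ 2 = algebraMap F L a)
    (hs' : s ∉ (algebraMap F L).range) : finrank F F⟮s⟯ = 2 := by
  have hroot : aeval s (X ^ 2 - C a) = 0 := by simp [hs]
  have hint : IsIntegral F s := ⟨X ^ 2 - C a, monic_X_pow_sub_C a two_ne_zero, hroot⟩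
  have hle : (minpoly F s).natDegree ≤ 2 := by
    simpa using natDegree_le_of_dvd (minpoly.dvd F s hroot) (X_pow_sub_C_ne_zero two_pos a)
  have hge : 2 ≤ (minpoly F s).natDegree := (minpoly.two_le_natDegree_iff hint).2 hs'
  rw [adjoin.finrank hint]
  omega

theorem finrank_eq_four_of_lt {E K : IntermediateField F L} [FiniteDimensional F K] (hEK : E < K)
    (hE : finrank F E = 2) (hK : finrank F K ≤ 4) : finrank F K = 4 := by
  have hdvd : 2 ∣ finrank F K := hE ▸ finrank_dvd_of_le_right hEK.le
  have hne : finrank F K ≠ 2 := fun h ↦ hEK.ne (eq_of_le_of_finrank_eq hEK.le (hE.trans h.symm))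
  have hpos : 0 < finrank F K := finrank_pos
  omega

theorem isGalois_adjoin_simple_of_rootSet_subset {α : L} (hα : IsIntegral F α)
    (hsep : IsSeparable F α) (hsplit : ((minpoly F α).map (algebraMap F L)).Splits)
    (hroots : (minpoly F α).rootSet L ⊆ F⟮α⟯) : IsGalois F F⟮α⟯ := by
  have hadj : adjoin F ((minpoly F α).rootSet L) = F⟮α⟯ :=
    le_antisymm (adjoin_le_iff.2 hroots) <| adjoin_simple_le_iff.2 <| subset_adjoin F _ <|
      mem_rootSet.2 ⟨minpoly.ne_zero hα, minpoly.aeval F α⟩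
  have := adjoin_rootSet_isSplittingField hsplit
  rw [hadj] at this
  exact IsGalois.of_separable_splitting_field hsep

end FieldExtension

section Biquadratic

variable {F L : Type*} [Field F] [Field L] [Algebra F L] {α t : L} {p c : F}

theorem aeval_sq_sub_C_sq_sub_C (z : L) (ht : t ^ 2 = algebraMap F L c) :
    aeval z ((X ^ 2 - C p) ^ 2 - C c) =
      (z ^ 2 - (algebraMap F L p + t)) * (z ^ 2 - (algebraMap F L p - t)) := by
  simp only [map_sub, map_pow, aeval_X, aeval_C, ← ht]
  ring

theorem minpoly_dvd_sq_sub_C_sq_sub_C (hα : α ^ 2 = algebraMap F L p + t)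
    (ht : t ^ 2 = algebraMap F L c) : minpoly F α ∣ (X ^ 2 - C p) ^ 2 - C c :=
  minpoly.dvd F α <| by rw [aeval_sq_sub_C_sq_sub_C α ht, hα, sub_self, zero_mul]

theorem isIntegral_of_sq_eq_add (hα : α ^ 2 = algebraMap F L p + t)
    (ht : t ^ 2 = algebraMap F L c) : IsIntegral F α :=
  ⟨(X ^ 2 - C p) ^ 2 - C c, by monicity!, by
    rw [← aeval_def, aeval_sq_sub_C_sq_sub_C α ht, hα, sub_self, zero_mul]⟩

theorem finrank_adjoin_le_four (hα : α ^ 2 = algebraMap F L p + t)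
    (ht : t ^ 2 = algebraMap F L c) : finrank F F⟮α⟯ ≤ 4 := by
  rw [adjoin.finrank (isIntegral_of_sq_eq_add hα ht)]
  refine (natDegree_le_of_dvd (minpoly_dvd_sq_sub_C_sq_sub_C hα ht) ?_).trans ?_
  · exact Monic.ne_zero (by monicity!)
  · compute_degree

theorem isGalois_adjoin_of_sq_eq_add_of_sq_eq_sub [CharZero F] [IsAlgClosed L] {β : L}
    (hα : α ^ 2 = algebraMap F L p + t) (hβ : β ^ 2 = algebraMap F L p - t)
    (ht : t ^ 2 = algebraMap F L c) (hβα : β ∈ F⟮α⟯) : IsGalois F F⟮α⟯ := by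
  have hint := isIntegral_of_sq_eq_add hα ht
  refine isGalois_adjoin_simple_of_rootSet_subset hint (minpoly.irreducible hint).separable
    (IsAlgClosed.splits _) fun z hz ↦ ?_
  have hz : aeval z ((X ^ 2 - C p) ^ 2 - C c) = 0 :=
    aeval_eq_zero_of_dvd_aeval_eq_zero (minpoly_dvd_sq_sub_C_sq_sub_C hα ht) (mem_rootSet.1 hz).2
  rw [aeval_sq_sub_C_sq_sub_C z ht, ← hα, ← hβ, mul_eq_zero, sub_eq_zero, sub_eq_zero,
    sq_eq_sq_iff_eq_or_eq_neg, sq_eq_sq_iff_eq_or_eq_neg] at hz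
  rcases hz with (rfl | rfl) | (rfl | rfl)
  · exact mem_adjoin_simple_self F _
  · exact neg_mem (mem_adjoin_simple_self F _)
  · exact hβα
  · exact neg_mem hβα

end Biquadratic

theorem div_sq_eq_sub_of_sq_eq_add {K : Type*} [Field K] {α a t u : K} (hα : α ≠ 0)
    (h : α ^ 2 = a + t) (hu : u ^ 2 = a ^ 2 - t ^ 2) : (u / α) ^ 2 = a - t := by
  have ha : a + t ≠ 0 := h ▸ pow_ne_zero 2 hα
  rw [div_pow, hu, h, div_eq_iff ha]
  ring

theorem irrational_sqrt_of_squarefree {d : ℕ} (hd : 1 < d) (hsf : Squarefree d) :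
    Irrational √d := by
  refine irrational_sqrt_natCast_iff.2 fun ⟨m, hm⟩ ↦ ?_
  have : m = 1 := Nat.isUnit_iff.1 (hsf m (hm ▸ dvd_refl _))
  subst this
  omega

theorem im_eq_zero_of_mem_adjoin_ofReal {x : ℝ} {z : ℂ} (hz : z ∈ ℚ⟮(x : ℂ)⟯) : z.im = 0 := by
  have hle : ℚ⟮(x : ℂ)⟯ ≤ (IsScalarTower.toAlgHom ℚ ℝ ℂ).fieldRange :=
    adjoin_simple_le_iff.2 ⟨x, rfl⟩
  obtain ⟨y, rfl⟩ := AlgHom.mem_fieldRange.1 (hle hz)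
  exact Complex.ofReal_im y

theorem stmt6_general (d : ℕ) (hd : 1 < d) (hsf : Squarefree d) (p q : ℚ) (hq : q ≠ 0)
    (hsq : ∃ r : ℚ, r ≠ 0 ∧ p ^ 2 - q ^ 2 * d = d * r ^ 2)
    (ξp : ℂ) (hξp : ξp ^ 2 = (p : ℂ) + (q : ℂ) * (Real.sqrt d : ℂ)) (him : ξp.re = 0) :
    Module.finrank ℚ (ℚ⟮ξp⟯ : IntermediateField ℚ ℂ) = 4 ∧
    IsGalois ℚ (ℚ⟮ξp⟯ : IntermediateField ℚ ℂ) ∧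
    ((Real.sqrt d : ℂ) ∈ (ℚ⟮ξp⟯ : IntermediateField ℚ ℂ)) := by
  obtain ⟨r, -, hr⟩ := hsq
  set s : ℂ := (√d : ℂ)
  set t : ℂ := q * s
  have hirr : Irrational √d := irrational_sqrt_of_squarefree hd hsf
  have hs : s ^ 2 = algebraMap ℚ ℂ d := by simp [s, ← Complex.ofReal_pow]
  have ht : t ^ 2 = algebraMap ℚ ℂ (q ^ 2 * d) := by simp [t, mul_pow, hs]
  have hξp' : ξp ^ 2 = algebraMap ℚ ℂ p + t := by simpa using hξp
  have hsK : s ∈ ℚ⟮ξp⟯ := mem_adjoin_simple_of_sq_eq hq (by simpa using hξp)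
  have hξp0 : ξp ≠ 0 := by
    rintro rfl
    refine ((hirr.ratCast_mul hq).ratCast_add p).ne_zero (Complex.ofReal_injective ?_)
    push_cast
    exact hξp.symm.trans (zero_pow two_ne_zero)
  refine ⟨?_, ?_, hsK⟩
  · have := adjoin.finiteDimensional (isIntegral_of_sq_eq_add hξp' ht)
    have hξps : ξp ∉ ℚ⟮s⟯ := fun h ↦ hξp0 (Complex.ext him (im_eq_zero_of_mem_adjoin_ofReal h))
    have hlt : ℚ⟮s⟯ < ℚ⟮ξp⟯ := SetLike.lt_iff_le_and_exists.2
      ⟨adjoin_simple_le_iff.2 hsK, ξp, mem_adjoin_simple_self ℚ ξp, hξps⟩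
    refine finrank_eq_four_of_lt hlt (finrank_adjoin_simple_eq_two hs ?_)
      (finrank_adjoin_le_four hξp' ht)
    rintro ⟨x, hx⟩
    exact hirr ⟨x, Complex.ofReal_injective (by simpa using hx)⟩
  · have hβ : (r * s / ξp) ^ 2 = algebraMap ℚ ℂ p - t := by
      refine div_sq_eq_sub_of_sq_eq_add hξp0 hξp' ?_
      rw [mul_pow, hs, ht, ← map_pow, ← map_sub, hr]
      simp [mul_comm]
    exact isGalois_adjoin_of_sq_eq_add_of_sq_eq_sub hξp' hβ ht
      (div_mem (mul_mem (SubfieldClass.ratCast_mem _ r) hsK) (mem_adjoin_simple_self ℚ ξp))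

theorem stmt6 (d : ℕ) (hd : 1 < d) (hsf : Squarefree d) (p q : ℚ) (hp : p < 0) (hq : q ≠ 0)
    (hd' : 0 < p ^ 2 - q ^ 2 * d)
    (hsq : ∃ r : ℚ, r ≠ 0 ∧ p ^ 2 - q ^ 2 * d = d * r ^ 2)
    (ξp : ℂ) (hξp : ξp ^ 2 = (p : ℂ) + (q : ℂ) * (Real.sqrt d : ℂ)) (him : ξp.re = 0) :
    Module.finrank ℚ (ℚ⟮ξp⟯ : IntermediateField ℚ ℂ) = 4 ∧
    IsGalois ℚ (ℚ⟮ξp⟯ : IntermediateField ℚ ℂ) ∧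
    ((Real.sqrt d : ℂ) ∈ (ℚ⟮ξp⟯ : IntermediateField ℚ ℂ)) :=
  stmt6_general d hd hsf p q hq hsq ξp hξp him
end

section
/- Let V be an n-dimensional vector space over a field k, and let δ¹, …, δⁿ and ε¹, …, εⁿ be vectors in V such that the n vectors δ¹ − ε¹, …, δⁿ − εⁿ form a basis of V. Then there exists a subset I ⊆ {1,…,n} such that the collection {δ^i : i ∈ I} ∪ {ε^j : j ∉ I} is linearly independent (hence a basis of V). -/
/-! Expand the determinant of the rows `δ i - ε i` (with respect to the basis they form)
multilinearly: it is a signed sum, over `I`, of the determinants of the mixed families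
`{δ i : i ∈ I} ∪ {ε j : j ∉ I}`. The total is `1`, so some summand is nonzero, and a family
with nonzero determinant is a basis. -/

theorem MultilinearMap.exists_piecewise_ne_zero_of_map_sub_ne_zero {R ι M N : Type*}
    [CommRing R] [AddCommGroup M] [Module R M] [AddCommGroup N] [Module R N]
    [Fintype ι] [DecidableEq ι] (f : MultilinearMap R (fun _ : ι => M) N) (δ ε : ι → M)
    (h : f (δ - ε) ≠ 0) : ∃ s : Finset ι, f (s.piecewise δ ε) ≠ 0 := by
  by_contra! hzero
  refine h ?_
  rw [sub_eq_add_neg, f.map_add_univ]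
  refine Finset.sum_eq_zero fun s _ => ?_
  have hsign : s.piecewise δ (-ε) = fun i => (if i ∈ s then 1 else -1 : R) • s.piecewise δ ε i := by
    ext i
    by_cases hi : i ∈ s <;> simp [hi]
  rw [hsign, f.map_smul_univ, hzero s, smul_zero]

theorem stmt9 (k V : Type*) [Field k] [AddCommGroup V] [Module k V] (n : ℕ)
    (δ ε : Fin n → V)
    (hli : LinearIndependent k (fun i => δ i - ε i))
    (hspan : Submodule.span k (Set.range fun i => δ i - ε i) = ⊤) :
    ∃ I : Finset (Fin n),
      LinearIndependent k (fun i : Fin n => if i ∈ I then δ i else ε i) ∧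
      Submodule.span k (Set.range fun i : Fin n => if i ∈ I then δ i else ε i) = ⊤ := by
  let b : Module.Basis (Fin n) k V := .mk hli hspan.ge
  have hdet : b.det (δ - ε) ≠ 0 := by
    rw [show δ - ε = b from (Module.Basis.coe_mk hli hspan.ge).symm, b.det_self]
    exact one_ne_zero
  obtain ⟨I, hI⟩ := b.det.toMultilinearMap.exists_piecewise_ne_zero_of_map_sub_ne_zero δ ε hdet
  exact ⟨I, b.is_basis_iff_det.mpr (isUnit_iff_ne_zero.mpr hI)⟩
end

section
/- Let d > 1 be a square-free positive integer, p < 0 and q ≠ 0 rationals with d' := p² − q²d > 0 not in d·(ℚ^×)² and not a square in ℚ. Set ξ₊ := √(p+q√d), ξ₋ := √(p−q√d) (purely imaginary, with ξ₊ξ₋ = −√d', √d' > 0). Then the normal closure of ℚ(√d, ξ₊) in ℂ is ℚ(√d, √d', ξ₊), which has degree 8 over ℚ. -/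
/-!
Write `s = √d`, `t = √d'` (both real) and `ξ = ξ₊` (not real). Every step of the tower
`ℚ ⊂ ℚ(s) ⊂ ℚ(s, ξ) ⊂ ℚ(s, t, ξ)` is quadratic: `s` is irrational, `ξ` is not real, and
`t ∉ ℚ(s, ξ)`, for otherwise the real field `ℚ(s, t)`, which is quartic because `d'` is neither a
square nor `d` times a square in `ℚ`, would coincide with `ℚ(s, ξ)`. Hence `ℚ(s, ξ) = ℚ(ξ)` is
quartic, the minimal polynomial of `ξ` is `X⁴ - 2pX² + d'` with roots `±ξ₊, ±ξ₋`, and the normal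
closure is `ℚ(ξ₊, ξ₋) = ℚ(s, t, ξ)` because `ξ₊ξ₋ = -t`.
-/

open IntermediateField Polynomial Module

variable {F E : Type*} [Field F] [Field E] [Algebra F E]

theorem minpoly_eq_X_sq_sub_C {x : E} {a : F} (hx : x ^ 2 = algebraMap F E a)
    (hxF : x ∉ Set.range (algebraMap F E)) : minpoly F x = X ^ 2 - C a := by
  have hmonic : (X ^ 2 - C a : F[X]).Monic := monic_X_pow_sub_C a two_ne_zero
  have haeval : aeval x (X ^ 2 - C a : F[X]) = 0 := by simp [hx]
  have hint : IsIntegral F x := ⟨_, hmonic, haeval⟩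
  refine (eq_of_monic_of_dvd_of_natDegree_le (minpoly.monic hint) hmonic
    (minpoly.dvd F x haeval) ?_).symm
  rw [natDegree_X_pow_sub_C]
  exact (minpoly.two_le_natDegree_iff hint).mpr (by simpa [RingHom.mem_range] using hxF)

theorem finrank_adjoin_simple_of_sq_eq {x : E} {a : F} (hx : x ^ 2 = algebraMap F E a)
    (hxF : x ∉ Set.range (algebraMap F E)) : finrank F F⟮x⟯ = 2 := by
  have hint : IsIntegral F x := ⟨X ^ 2 - C a, monic_X_pow_sub_C a two_ne_zero, by simp [hx]⟩
  rw [adjoin.finrank hint, minpoly_eq_X_sq_sub_C hx hxF, natDegree_X_pow_sub_C]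

theorem finrank_adjoin_insert_of_sq_mem {s : Set E} {x : E} (hsq : x ^ 2 ∈ adjoin F s)
    (hx : x ∉ adjoin F s) : finrank F (adjoin F (insert x s)) = 2 * finrank F (adjoin F s) := by
  rw [Set.insert_eq, Set.union_comm, ← adjoin_adjoin_left, mul_comm]
  refine (finrank_mul_finrank F (adjoin F s) (adjoin (adjoin F s) {x})).symm.trans ?_
  rw [finrank_adjoin_simple_of_sq_eq (a := ⟨_, hsq⟩) rfl (by simpa using hx)]

theorem exists_eq_add_mul_of_mem_adjoin_of_sq_eq {x y : E} {a : F}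
    (hx : x ^ 2 = algebraMap F E a) (hy : y ∈ F⟮x⟯) :
    ∃ u v : F, y = algebraMap F E u + algebraMap F E v * x := by
  have hint : IsIntegral F x := ⟨X ^ 2 - C a, monic_X_pow_sub_C a two_ne_zero, by simp [hx]⟩
  rw [← mem_toSubalgebra, adjoin_simple_toSubalgebra_of_isAlgebraic hint.isAlgebraic] at hy
  induction hy using Algebra.adjoin_induction with
  | mem z hz => exact ⟨0, 1, by simp [Set.mem_singleton_iff.mp hz]⟩
  | algebraMap r => exact ⟨r, 0, by simp⟩
  | add z w _ _ hz hw =>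
    obtain ⟨u, v, rfl⟩ := hz
    obtain ⟨u', v', rfl⟩ := hw
    exact ⟨u + u', v + v', by simp only [map_add]; ring⟩
  | mul z w _ _ hz hw =>
    obtain ⟨u, v, rfl⟩ := hz
    obtain ⟨u', v', rfl⟩ := hw
    refine ⟨u * u' + v * v' * a, u * v' + u' * v, ?_⟩
    simp only [map_add, map_mul]
    linear_combination algebraMap F E v * algebraMap F E v' * hx

theorem exists_sq_eq_or_eq_mul_sq_of_mem_adjoin [NeZero (2 : F)] {x y : E} {a b : F}
    (hx : x ^ 2 = algebraMap F E a) (hxF : x ∉ Set.range (algebraMap F E))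
    (hy : y ^ 2 = algebraMap F E b) (hyx : y ∈ F⟮x⟯) :
    (∃ r : F, b = r ^ 2) ∨ ∃ r : F, r ≠ 0 ∧ b = a * r ^ 2 := by
  obtain ⟨u, v, rfl⟩ := exists_eq_add_mul_of_mem_adjoin_of_sq_eq hx hyx
  have key : algebraMap F E (2 * u * v) * x = algebraMap F E (b - u ^ 2 - v ^ 2 * a) := by
    simp only [map_mul, map_sub, map_pow, map_ofNat]
    linear_combination hy - algebraMap F E v ^ 2 * hx
  by_cases huv : u * v = 0
  · rcases mul_eq_zero.mp huv with rfl | rfl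
    · have hb : b = a * v ^ 2 := (algebraMap F E).injective <| by
        rw [← hy, map_mul, map_pow, map_zero]
        linear_combination (algebraMap F E v) ^ 2 * hx
      rcases eq_or_ne v 0 with rfl | hv
      · exact .inl ⟨0, by simpa using hb⟩
      · exact .inr ⟨v, hv, hb⟩
    · exact .inl ⟨u, (algebraMap F E).injective <| by simp [← hy]⟩
  · have h2uv : (2 * u * v : F) ≠ 0 := by simpa [mul_assoc, two_ne_zero] using huv
    refine absurd ⟨(b - u ^ 2 - v ^ 2 * a) / (2 * u * v), ?_⟩ hxF
    rw [map_div₀, ← key, mul_div_cancel_left₀ _ ((_root_.map_ne_zero _).mpr h2uv)]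

theorem finrank_adjoin_pair_eq_four {s ξ : E} {a : F} (hs : s ^ 2 = algebraMap F E a)
    (hsF : s ∉ Set.range (algebraMap F E)) (hξ : ξ ^ 2 ∈ F⟮s⟯) (hξs : ξ ∉ F⟮s⟯) :
    finrank F F⟮s, ξ⟯ = 4 := by
  rw [Set.pair_comm, finrank_adjoin_insert_of_sq_mem hξ hξs,
    finrank_adjoin_simple_of_sq_eq hs hsF]

theorem finrank_adjoin_triple_eq_eight [NeZero (2 : F)] {s t ξ : E} {a b : F}
    (R : IntermediateField F E) (hs : s ^ 2 = algebraMap F E a)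
    (hsF : s ∉ Set.range (algebraMap F E)) (ht : t ^ 2 = algebraMap F E b)
    (hb : ¬∃ r : F, b = r ^ 2) (hb' : ¬∃ r : F, r ≠ 0 ∧ b = a * r ^ 2) (hξ : ξ ^ 2 ∈ F⟮s⟯)
    (hsR : s ∈ R) (htR : t ∈ R) (hξR : ξ ∉ R) :
    finrank F F⟮s, t, ξ⟯ = 8 := by
  have hξs : ξ ∉ F⟮s⟯ := fun h ↦ hξR (adjoin_simple_le_iff.mpr hsR h)
  have hts : t ∉ F⟮s⟯ := fun h ↦ (exists_sq_eq_or_eq_mul_sq_of_mem_adjoin hs hsF ht h).elim hb hb'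
  have ht_sq : t ^ 2 ∈ F⟮s⟯ := ht ▸ IntermediateField.algebraMap_mem _ b
  have hsξ := finrank_adjoin_pair_eq_four hs hsF hξ hξs
  have htsξ : t ∉ F⟮s, ξ⟯ := by
    intro h
    have hle : F⟮s, t⟯ ≤ F⟮s, ξ⟯ := by
      rw [adjoin_le_iff, Set.insert_subset_iff, Set.singleton_subset_iff]
      exact ⟨subset_adjoin F _ (by simp), h⟩
    have : FiniteDimensional F F⟮s, ξ⟯ := .of_finrank_pos (by omega)
    have heq := eq_of_le_of_finrank_eq hle
      ((finrank_adjoin_pair_eq_four hs hsF ht_sq hts).trans hsξ.symm)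
    have hξ_st : ξ ∈ F⟮s, t⟯ := heq ▸ subset_adjoin F _ (by simp)
    refine hξR (adjoin_le_iff.mpr ?_ hξ_st)
    rw [Set.insert_subset_iff, Set.singleton_subset_iff]
    exact ⟨hsR, htR⟩
  rw [Set.insert_comm,
    finrank_adjoin_insert_of_sq_mem (ht ▸ IntermediateField.algebraMap_mem _ b) htsξ, hsξ]

theorem normalClosure_adjoin_simple_eq_adjoin_rootSet {x : E} (hx : IsIntegral F x) :
    normalClosure F F⟮x⟯ E = adjoin F ((minpoly F x).rootSet E) := by
  refine le_antisymm ?_ (adjoin_le_iff.mpr fun y hy ↦ ?_)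
  · refine normalClosure_le_iff.mpr fun f ↦ ?_
    rintro _ ⟨y, rfl⟩
    have hroot : f (AdjoinSimple.gen F x) ∈ adjoin F ((minpoly F x).rootSet E) := by
      refine subset_adjoin F _ (mem_rootSet.mpr ⟨minpoly.ne_zero hx, ?_⟩)
      rw [aeval_algHom_apply, aeval_gen_minpoly, map_zero]
    obtain ⟨g, rfl⟩ := (adjoin.powerBasis hx).exists_eq_aeval' y
    rw [adjoin.powerBasis_gen, AlgHom.toRingHom_eq_coe, AlgHom.coe_toRingHom,
      ← aeval_algHom_apply]
    have := (aeval (⟨_, hroot⟩ : adjoin F ((minpoly F x).rootSet E)) g).2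
    rwa [← IntermediateField.aeval_coe] at this
  · let φ := (algHomAdjoinIntegralEquiv F hx).symm ⟨y, mem_aroots.mpr (mem_rootSet.mp hy)⟩
    exact φ.fieldRange_le_normalClosure ⟨_, algHomAdjoinIntegralEquiv_symm_apply_gen F hx _⟩

theorem minpoly_eq_of_natDegree_eq_finrank {x : E} {p : F[X]} (hp : p.Monic)
    (hpx : aeval x p = 0) (hdeg : p.natDegree = finrank F F⟮x⟯) : minpoly F x = p := by
  have hint : IsIntegral F x := ⟨p, hp, hpx⟩
  refine (eq_of_monic_of_dvd_of_natDegree_le (minpoly.monic hint) hp (minpoly.dvd F x hpx) ?_).symm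
  rw [hdeg, adjoin.finrank hint]

section NestedSqrt

variable {s t ξ η : E} {a c e : F}

/-- The polynomial whose roots are `±√(c ± e √a)`. -/
noncomputable def nestedSqrtPoly (a c e : F) : F[X] :=
  X ^ 4 - C (2 * c) * X ^ 2 + C (c ^ 2 - e ^ 2 * a)

theorem nestedSqrtPoly_monic (a c e : F) : (nestedSqrtPoly a c e).Monic := by
  unfold nestedSqrtPoly; monicity!

theorem natDegree_nestedSqrtPoly (a c e : F) : (nestedSqrtPoly a c e).natDegree = 4 := by
  unfold nestedSqrtPoly; compute_degree!

theorem aeval_nestedSqrtPoly (hs : s ^ 2 = algebraMap F E a)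
    (hξ : ξ ^ 2 = algebraMap F E c + algebraMap F E e * s)
    (hη : η ^ 2 = algebraMap F E c - algebraMap F E e * s) (y : E) :
    aeval y (nestedSqrtPoly a c e) = (y ^ 2 - ξ ^ 2) * (y ^ 2 - η ^ 2) := by
  rw [hξ, hη]
  simp only [nestedSqrtPoly, map_add, map_sub, map_mul, map_pow, aeval_X, aeval_C, map_ofNat]
  linear_combination (algebraMap F E e) ^ 2 * hs

theorem rootSet_nestedSqrtPoly (hs : s ^ 2 = algebraMap F E a)
    (hξ : ξ ^ 2 = algebraMap F E c + algebraMap F E e * s)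
    (hη : η ^ 2 = algebraMap F E c - algebraMap F E e * s) :
    (nestedSqrtPoly a c e).rootSet E = {ξ, -ξ, η, -η} := by
  ext y
  rw [mem_rootSet, aeval_nestedSqrtPoly hs hξ hη]
  simp only [(nestedSqrtPoly_monic a c e).ne_zero, ne_eq, not_false_eq_true, true_and,
    mul_eq_zero, sub_eq_zero, sq_eq_sq_iff_eq_or_eq_neg, Set.mem_insert_iff, Set.mem_singleton_iff,
    or_assoc]

theorem adjoin_pair_eq_adjoin_simple (he : e ≠ 0)
    (hξ : ξ ^ 2 = algebraMap F E c + algebraMap F E e * s) : F⟮s, ξ⟯ = F⟮ξ⟯ := by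
  have hs : s = algebraMap F E e⁻¹ * (ξ ^ 2 - algebraMap F E c) := by
    have he' : algebraMap F E e ≠ 0 := (_root_.map_ne_zero _).mpr he
    rw [hξ, map_inv₀, add_sub_cancel_left, inv_mul_cancel_left₀ he']
  refine le_antisymm (adjoin_le_iff.mpr ?_) (adjoin.mono F _ _ (by simp))
  rw [Set.insert_subset_iff, Set.singleton_subset_iff, hs]
  exact ⟨mul_mem (IntermediateField.algebraMap_mem _ _)
    (sub_mem (pow_mem (mem_adjoin_simple_self F ξ) 2) (IntermediateField.algebraMap_mem _ _)),
    mem_adjoin_simple_self F ξ⟩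

theorem adjoin_conjugates_eq (he : e ≠ 0) (hξ0 : ξ ≠ 0)
    (hξ : ξ ^ 2 = algebraMap F E c + algebraMap F E e * s) (hξη : ξ * η = -t) :
    adjoin F {ξ, -ξ, η, -η} = F⟮s, t, ξ⟯ := by
  have hη : η = -t / ξ := by rw [eq_div_iff hξ0]; linear_combination hξη
  have hξL : ξ ∈ F⟮s, t, ξ⟯ := subset_adjoin F _ (by simp)
  have hηL : η ∈ F⟮s, t, ξ⟯ := hη ▸ div_mem (neg_mem (subset_adjoin F _ (by simp))) hξL
  have hξM : ξ ∈ adjoin F {ξ, -ξ, η, -η} := subset_adjoin F _ (by simp)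
  have hηM : η ∈ adjoin F {ξ, -ξ, η, -η} := subset_adjoin F _ (by simp)
  have hsM : s ∈ adjoin F {ξ, -ξ, η, -η} := by
    refine adjoin_simple_le_iff.mpr hξM ?_
    rw [← adjoin_pair_eq_adjoin_simple he hξ]
    exact subset_adjoin F _ (by simp)
  refine le_antisymm ?_ ?_ <;> simp only [adjoin_le_iff, Set.insert_subset_iff,
    Set.singleton_subset_iff, SetLike.mem_coe]
  · exact ⟨hξL, neg_mem hξL, hηL, neg_mem hηL⟩
  · exact ⟨hsM, neg_neg t ▸ hξη ▸ neg_mem (mul_mem hξM hηM), hξM⟩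

theorem ne_zero_of_sq_eq_add_mul (he : e ≠ 0) (hsF : s ∉ Set.range (algebraMap F E))
    (hξ : ξ ^ 2 = algebraMap F E c + algebraMap F E e * s) : ξ ≠ 0 := by
  rintro rfl
  refine hsF ⟨-c / e, ?_⟩
  rw [map_div₀, map_neg, div_eq_iff ((_root_.map_ne_zero _).mpr he)]
  linear_combination hξ

theorem sq_mem_adjoin_simple (hξ : ξ ^ 2 = algebraMap F E c + algebraMap F E e * s) :
    ξ ^ 2 ∈ F⟮s⟯ :=
  hξ ▸ add_mem (IntermediateField.algebraMap_mem _ c)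
    (mul_mem (IntermediateField.algebraMap_mem _ e) (mem_adjoin_simple_self F s))

theorem normalClosure_adjoin_pair_eq (he : e ≠ 0) (hξ0 : ξ ≠ 0) (hs : s ^ 2 = algebraMap F E a)
    (hξ : ξ ^ 2 = algebraMap F E c + algebraMap F E e * s)
    (hη : η ^ 2 = algebraMap F E c - algebraMap F E e * s) (hξη : ξ * η = -t)
    (h4 : finrank F F⟮s, ξ⟯ = 4) :
    normalClosure F F⟮s, ξ⟯ E = F⟮s, t, ξ⟯ := by
  rw [adjoin_pair_eq_adjoin_simple he hξ] at h4 ⊢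
  have hroot : aeval ξ (nestedSqrtPoly a c e) = 0 := by simp [aeval_nestedSqrtPoly hs hξ hη]
  have hmin : minpoly F ξ = nestedSqrtPoly a c e :=
    minpoly_eq_of_natDegree_eq_finrank (nestedSqrtPoly_monic a c e) hroot
      (by rw [natDegree_nestedSqrtPoly, h4])
  rw [normalClosure_adjoin_simple_eq_adjoin_rootSet ⟨_, nestedSqrtPoly_monic a c e, hroot⟩, hmin,
    rootSet_nestedSqrtPoly hs hξ hη, adjoin_conjugates_eq he hξ0 hξ hξη]

end NestedSqrt

theorem Squarefree.not_isSquare {R : Type*} [CommMonoid R] {r : R} (hr : Squarefree r)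
    (hu : ¬IsUnit r) : ¬IsSquare r := by
  rintro ⟨x, rfl⟩
  exact hu ((hr x dvd_rfl).mul (hr x dvd_rfl))

theorem Irrational.ofReal_notMem_range_algebraMap {x : ℝ} (hx : Irrational x) :
    (x : ℂ) ∉ Set.range (algebraMap ℚ ℂ) := by
  rintro ⟨r, hr⟩
  exact hx ⟨r, Complex.ofReal_injective (by simpa using hr)⟩

theorem stmt16_general (d : ℕ) (hd : 1 < d) (hsf : Squarefree d) (p q : ℚ) (hq : q ≠ 0)
    (hnsq : ¬ ∃ r : ℚ, r ≠ 0 ∧ p ^ 2 - q ^ 2 * d = d * r ^ 2)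
    (hnsq' : ¬ ∃ r : ℚ, p ^ 2 - q ^ 2 * d = r ^ 2)
    (sd sd' : ℂ)
    (hsd : sd = ((Real.sqrt d : ℝ) : ℂ))
    (hsd' : sd' = ((Real.sqrt ((p : ℝ) ^ 2 - (q : ℝ) ^ 2 * d) : ℝ) : ℂ))
    (ξp ξm : ℂ)
    (hξp : ξp ^ 2 = (p : ℂ) + (q : ℂ) * sd)
    (hξm : ξm ^ 2 = (p : ℂ) - (q : ℂ) * sd)
    (himp : ξp.re = 0)
    (hprod : ξp * ξm = -sd') :
    normalClosure ℚ (ℚ⟮sd, ξp⟯ : IntermediateField ℚ ℂ) ℂ =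
      (ℚ⟮sd, sd', ξp⟯ : IntermediateField ℚ ℂ) ∧
    Module.finrank ℚ (ℚ⟮sd, sd', ξp⟯ : IntermediateField ℚ ℂ) = 8 := by
  set R : IntermediateField ℚ ℂ := (Complex.ofRealAm.restrictScalars ℚ).fieldRange
  have hs : sd ^ 2 = algebraMap ℚ ℂ d := by
    rw [hsd, ← Complex.ofReal_pow, Real.sq_sqrt d.cast_nonneg]; simp
  have hsF : sd ∉ Set.range (algebraMap ℚ ℂ) := hsd ▸ (irrational_sqrt_natCast_iff.mpr
    (hsf.not_isSquare (by rw [Nat.isUnit_iff]; omega))).ofReal_notMem_range_algebraMap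
  have hξ : ξp ^ 2 = algebraMap ℚ ℂ p + algebraMap ℚ ℂ q * sd := by simpa using hξp
  have hη : ξm ^ 2 = algebraMap ℚ ℂ p - algebraMap ℚ ℂ q * sd := by simpa using hξm
  have ht : sd' ^ 2 = algebraMap ℚ ℂ (p ^ 2 - q ^ 2 * d) := by
    simp only [map_sub, map_mul, map_pow, map_natCast, eq_ratCast] at hs ⊢
    linear_combination (sd' - ξp * ξm) * hprod + ξp ^ 2 * hξm + (p - q * sd) * hξp - q ^ 2 * hs
  have hsR : sd ∈ R := ⟨_, hsd.symm⟩
  have htR : sd' ∈ R := ⟨_, hsd'.symm⟩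
  have hξ0 := ne_zero_of_sq_eq_add_mul hq hsF hξ
  have hξR : ξp ∉ R := by
    rintro ⟨r, rfl⟩
    exact hξ0 (Complex.ext himp (by simp))
  have h4 := finrank_adjoin_pair_eq_four hs hsF (sq_mem_adjoin_simple hξ)
    fun h ↦ hξR (adjoin_simple_le_iff.mpr hsR h)
  exact ⟨normalClosure_adjoin_pair_eq hq hξ0 hs hξ hη hprod h4,
    finrank_adjoin_triple_eq_eight R hs hsF ht hnsq' hnsq (sq_mem_adjoin_simple hξ)
      hsR htR hξR⟩

theorem stmt16 (d : ℕ) (hd : 1 < d) (hsf : Squarefree d) (p q : ℚ) (hp : p < 0) (hq : q ≠ 0)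
    (hd' : 0 < p ^ 2 - q ^ 2 * d)
    (hnsq : ¬ ∃ r : ℚ, r ≠ 0 ∧ p ^ 2 - q ^ 2 * d = d * r ^ 2)
    (hnsq' : ¬ ∃ r : ℚ, p ^ 2 - q ^ 2 * d = r ^ 2)
    (sd sd' : ℂ)
    (hsd : sd = ((Real.sqrt d : ℝ) : ℂ))
    (hsd' : sd' = ((Real.sqrt ((p : ℝ) ^ 2 - (q : ℝ) ^ 2 * d) : ℝ) : ℂ))
    (ξp ξm : ℂ)
    (hξp : ξp ^ 2 = (p : ℂ) + (q : ℂ) * sd)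
    (hξm : ξm ^ 2 = (p : ℂ) - (q : ℂ) * sd)
    (himp : ξp.re = 0) (himm : ξm.re = 0)
    (hprod : ξp * ξm = -sd') :
    normalClosure ℚ (ℚ⟮sd, ξp⟯ : IntermediateField ℚ ℂ) ℂ =
      (ℚ⟮sd, sd', ξp⟯ : IntermediateField ℚ ℂ) ∧
    Module.finrank ℚ (ℚ⟮sd, sd', ξp⟯ : IntermediateField ℚ ℂ) = 8 :=
  stmt16_general d hd hsf p q hq hnsq hnsq' sd sd' hsd hsd' ξp ξm hξp hξm himp hprod
end
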